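/- For every R ∈ [0, 1], ∫₀^{√((1−R⁴)/(1+R⁴))} 1/√(1 − r⁴) dr = ∫_{R²}^1 1/√(1 − r⁴) dr. -/

import Mathlib

/-!
The substitution `r = g s` with `g s = √((1 - s²) / (1 + s²))` is a decreasing involution of
`[0, 1]` exchanging `0` and `1`, and it satisfies `|g' s| / √(1 - (g s)⁴) = 1 / √(1 - s⁴)`,
because `√(1 - (g s)⁴) = 2 s / (1 + s²)` and `(1 + s²) g s = √(1 - s⁴)`. Hence it carries
`(R², 1)` onto `(0, g R²)` while preserving the measure `dr / √(1 - r⁴)`. The one-dimensional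
change of variables formula for injective maps needs no integrability, so the singularity at
`r = 1` causes no trouble.
-/

open MeasureTheory Set

noncomputable def lemniscateSubst (s : ℝ) : ℝ := √((1 - s ^ 2) / (1 + s ^ 2))

section

variable {s : ℝ}

lemma sq_lemniscateSubst (hs : s ^ 2 ≤ 1) :
    lemniscateSubst s ^ 2 = (1 - s ^ 2) / (1 + s ^ 2) :=
  Real.sq_sqrt (div_nonneg (by linarith) (by positivity))

lemma lemniscateSubst_zero : lemniscateSubst 0 = 1 := by simp [lemniscateSubst]

lemma lemniscateSubst_one : lemniscateSubst 1 = 0 := by simp [lemniscateSubst]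

lemma lemniscateSubst_lemniscateSubst (h0 : 0 ≤ s) (h1 : s ≤ 1) :
    lemniscateSubst (lemniscateSubst s) = s := by
  have hs : s ^ 2 ≤ 1 := by nlinarith
  rw [lemniscateSubst, sq_lemniscateSubst hs]
  convert Real.sqrt_sq h0 using 2
  field_simp
  ring

lemma strictAntiOn_lemniscateSubst : StrictAntiOn lemniscateSubst (Icc 0 1) := by
  intro a ⟨ha0, _⟩ b ⟨_, hb1⟩ hab
  apply Real.sqrt_lt_sqrt (div_nonneg (by nlinarith) (by positivity))
  rw [div_lt_div_iff₀ (by positivity) (by positivity)]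
  nlinarith [mul_lt_mul'' hab hab ha0 ha0]

lemma lemniscateSubst_mem_Icc (h0 : 0 ≤ s) (h1 : s ≤ 1) : lemniscateSubst s ∈ Icc 0 1 :=
  ⟨Real.sqrt_nonneg _, lemniscateSubst_zero ▸
    strictAntiOn_lemniscateSubst.antitoneOn ⟨le_rfl, zero_le_one⟩ ⟨h0, h1⟩ h0⟩

lemma image_lemniscateSubst_Ioo {u : ℝ} (h0 : 0 ≤ u) (h1 : u ≤ 1) :
    lemniscateSubst '' Ioo u 1 = Ioo 0 (lemniscateSubst u) := by
  have hu : u ∈ Icc 0 1 := ⟨h0, h1⟩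
  ext y
  constructor
  · rintro ⟨x, ⟨hux, hx1⟩, rfl⟩
    have hx : x ∈ Icc 0 1 := ⟨h0.trans hux.le, hx1.le⟩
    exact ⟨lemniscateSubst_one ▸ strictAntiOn_lemniscateSubst hx ⟨zero_le_one, le_rfl⟩ hx1,
      strictAntiOn_lemniscateSubst hu hx hux⟩
  · rintro ⟨hy0, hyu⟩
    have hy : y ∈ Icc 0 1 := ⟨hy0.le, hyu.le.trans (lemniscateSubst_mem_Icc h0 h1).2⟩
    refine ⟨lemniscateSubst y, ⟨?_, ?_⟩, lemniscateSubst_lemniscateSubst hy.1 hy.2⟩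
    · simpa [lemniscateSubst_lemniscateSubst h0 h1] using
        strictAntiOn_lemniscateSubst hy (lemniscateSubst_mem_Icc h0 h1) hyu
    · simpa [lemniscateSubst_zero] using
        strictAntiOn_lemniscateSubst ⟨le_rfl, zero_le_one⟩ hy hy0

lemma one_add_sq_mul_lemniscateSubst (h0 : 0 ≤ s) (h1 : s ≤ 1) :
    (1 + s ^ 2) * lemniscateSubst s = √(1 - s ^ 4) := by
  have hs : s ^ 2 ≤ 1 := by nlinarith
  rw [← Real.sqrt_sq (mul_nonneg (by positivity) (lemniscateSubst_mem_Icc h0 h1).1), mul_pow,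
    sq_lemniscateSubst hs]
  congr 1
  field_simp
  ring

lemma sqrt_one_sub_lemniscateSubst_pow_four (h0 : 0 ≤ s) (h1 : s ≤ 1) :
    √(1 - lemniscateSubst s ^ 4) = 2 * s / (1 + s ^ 2) := by
  have hs : s ^ 2 ≤ 1 := by nlinarith
  rw [← Real.sqrt_sq (by positivity : 0 ≤ 2 * s / (1 + s ^ 2)),
    show lemniscateSubst s ^ 4 = (lemniscateSubst s ^ 2) ^ 2 by ring, sq_lemniscateSubst hs]
  congr 1
  field_simp
  ring

lemma hasDerivAt_lemniscateSubst (h0 : 0 < s) (h1 : s < 1) :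
    HasDerivAt lemniscateSubst (-(2 * s) / ((1 + s ^ 2) * √(1 - s ^ 4))) s := by
  have hpos : 0 < (1 - s ^ 2) / (1 + s ^ 2) := div_pos (by nlinarith) (by positivity)
  have hquot : HasDerivAt (fun x : ℝ => (1 - x ^ 2) / (1 + x ^ 2))
      (-(4 * s) / (1 + s ^ 2) ^ 2) s := by
    refine (((hasDerivAt_pow 2 s).const_sub 1).div ((hasDerivAt_pow 2 s).const_add 1)
      (by positivity)).congr_deriv ?_
    field_simp
    ring
  refine ((Real.hasDerivAt_sqrt hpos.ne').comp s hquot).congr_deriv ?_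
  rw [← one_add_sq_mul_lemniscateSubst h0.le h1.le, lemniscateSubst]
  field_simp
  ring

lemma abs_deriv_lemniscateSubst_mul (h0 : 0 < s) (h1 : s < 1) :
    |deriv lemniscateSubst s| * (1 / √(1 - lemniscateSubst s ^ 4)) = 1 / √(1 - s ^ 4) := by
  have hs4 : 0 < 1 - s ^ 4 := by nlinarith [pow_lt_one₀ h0.le h1 (by norm_num : 4 ≠ 0)]
  rw [(hasDerivAt_lemniscateSubst h0 h1).deriv, sqrt_one_sub_lemniscateSubst_pow_four h0.le h1.le,
    abs_div, abs_neg, abs_of_pos (by positivity), abs_of_pos (by positivity)]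
  field_simp

end

theorem integral_lemniscateSubst {u : ℝ} (h0 : 0 ≤ u) (h1 : u ≤ 1) :
    ∫ r in (0 : ℝ)..lemniscateSubst u, 1 / √(1 - r ^ 4) = ∫ r in u..1, 1 / √(1 - r ^ 4) := by
  have hderiv (x : ℝ) (hx : x ∈ Ioo u 1) :
      HasDerivWithinAt lemniscateSubst (deriv lemniscateSubst x) (Ioo u 1) x :=
    (hasDerivAt_lemniscateSubst (h0.trans_lt hx.1) hx.2).differentiableAt.hasDerivAt
      |>.hasDerivWithinAt
  rw [intervalIntegral.integral_of_le (lemniscateSubst_mem_Icc h0 h1).1,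
    intervalIntegral.integral_of_le h1, integral_Ioc_eq_integral_Ioo,
    integral_Ioc_eq_integral_Ioo, ← image_lemniscateSubst_Ioo h0 h1,
    integral_image_eq_integral_abs_deriv_smul measurableSet_Ioo hderiv
      (strictAntiOn_lemniscateSubst.injOn.mono
        (Ioo_subset_Icc_self.trans (Icc_subset_Icc_left h0)))]
  exact setIntegral_congr_fun measurableSet_Ioo fun x hx =>
    abs_deriv_lemniscateSubst_mul (h0.trans_lt hx.1) hx.2

theorem lemniscate_arc_lengths_equal (R : ℝ) (hR : R ∈ Set.Icc (0:ℝ) 1) :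
    ∫ r in (0:ℝ)..Real.sqrt ((1 - R ^ 4) / (1 + R ^ 4)), 1 / Real.sqrt (1 - r ^ 4) =
      ∫ r in (R ^ 2)..1, 1 / Real.sqrt (1 - r ^ 4) := by
  have hbound : Real.sqrt ((1 - R ^ 4) / (1 + R ^ 4)) = lemniscateSubst (R ^ 2) := by
    rw [lemniscateSubst, ← pow_mul]
  rw [hbound]
  exact integral_lemniscateSubst (sq_nonneg R) (pow_le_one₀ hR.1 hR.2)
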